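/- Under the recurrence of the previous statement (ŵ_ℓ = γ · ŵ_{ℓ+1}† ⋯ ŵ_L† ẑ ŵ₁† ⋯ ŵ_{ℓ−1}† for all ℓ), with β̂ = ŵ_L ⋯ ŵ₁, both matrices ẑ β̂† and β̂† ẑ are Hermitian. -/
import Mathlib


open Matrix

/-- `prodConjT w a b = (w a)ᴴ * (w (a+1))ᴴ * ⋯ * (w b)ᴴ` (the empty product `1` when
`b < a`). -/
noncomputable def prodConjT {n : ℕ} (w : ℕ → Matrix (Fin n) (Fin n) ℂ) (a b : ℕ) :
    Matrix (Fin n) (Fin n) ℂ :=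
  ((List.range (b + 1 - a)).map (fun i => (w (a + i))ᴴ)).prod

/-- `prodRev w L = w L * w (L−1) * ⋯ * w 1`. -/
noncomputable def prodRev {n : ℕ} (w : ℕ → Matrix (Fin n) (Fin n) ℂ) (L : ℕ) :
    Matrix (Fin n) (Fin n) ℂ :=
  ((List.range L).map (fun i => w (L - i))).prod

lemma prodConjT_empty {n : ℕ} (w : ℕ → Matrix (Fin n) (Fin n) ℂ) (L : ℕ) :
    prodConjT w (L + 1) L = 1 := by
  simp [prodConjT, Nat.sub_self]

lemma prodConjT_one_succ {n : ℕ} (w : ℕ → Matrix (Fin n) (Fin n) ℂ) (m : ℕ) :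
    prodConjT w 1 (m + 1) = prodConjT w 1 m * (w (m + 1))ᴴ := by
  simp only [prodConjT, Nat.add_sub_cancel]
  rw [List.range_succ]
  simp [Nat.add_comm]

lemma prodConjT_one_front {n : ℕ} (w : ℕ → Matrix (Fin n) (Fin n) ℂ) (m : ℕ) :
    prodConjT w 1 (m + 1) = (w 1)ᴴ * prodConjT w 2 (m + 1) := by
  simp only [prodConjT, Nat.add_sub_cancel]
  have h2 : m + 1 + 1 - 2 = m := by omega
  rw [h2, List.range_succ_eq_map, List.map_cons, List.prod_cons, List.map_map]
  have hf : ((fun i => (w (1 + i))ᴴ) ∘ Nat.succ) = fun i => (w (2 + i))ᴴ := by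
    funext i
    have : 1 + Nat.succ i = 2 + i := by omega
    simp [Function.comp, this]
  rw [hf]

lemma prodRev_succ {n : ℕ} (w : ℕ → Matrix (Fin n) (Fin n) ℂ) (m : ℕ) :
    prodRev w (m + 1) = w (m + 1) * prodRev w m := by
  simp only [prodRev]
  rw [List.range_succ_eq_map]
  simp only [List.map_cons, List.map_map, List.prod_cons, Nat.sub_zero]
  congr 1
  congr 1
  ext i
  simp [Function.comp, Nat.succ_sub_succ]

lemma conjT_prodRev {n : ℕ} (w : ℕ → Matrix (Fin n) (Fin n) ℂ) (L : ℕ) :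
    (prodRev w L)ᴴ = prodConjT w 1 L := by
  induction L with
  | zero => simp [prodRev, prodConjT]
  | succ m ih =>
      rw [prodRev_succ, conjTranspose_mul, ih, prodConjT_one_succ]

/-- under the recurrence `ŵ_ℓ = γ ŵ_{ℓ+1}† ⋯ ŵ_L† ẑ ŵ₁† ⋯ ŵ_{ℓ−1}†`, with
`β̂ = ŵ_L ⋯ ŵ₁`, both `ẑβ̂†` and `β̂†ẑ` are Hermitian. -/
theorem z_beta_hermitian {n L : ℕ} (hL : 1 ≤ L)
    (w : ℕ → Matrix (Fin n) (Fin n) ℂ) (z : Matrix (Fin n) (Fin n) ℂ)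
    (γ : ℝ) (hγ : 0 < γ)
    (hrec : ∀ ℓ, 1 ≤ ℓ → ℓ ≤ L →
      w ℓ = (γ : ℂ) • (prodConjT w (ℓ + 1) L * z * prodConjT w 1 (ℓ - 1))) :
    (z * (prodRev w L)ᴴ).IsHermitian ∧ ((prodRev w L)ᴴ * z).IsHermitian := by
  obtain ⟨m, rfl⟩ : ∃ m, L = m + 1 := ⟨L - 1, (Nat.succ_pred_eq_of_pos hL).symm⟩
  have hγ0 : (γ : ℂ) ≠ 0 := by exact_mod_cast ne_of_gt hγ
  have hγconj : (starRingEnd ℂ) ((γ : ℂ)⁻¹) = (γ : ℂ)⁻¹ := by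
    simp [Complex.conj_ofReal, ← Complex.ofReal_inv]
  -- case ℓ = L
  have hLrec := hrec (m + 1) (Nat.le_add_left 1 m) le_rfl
  rw [prodConjT_empty, Nat.add_sub_cancel, one_mul] at hLrec
  have hz1 : z * prodConjT w 1 m = (γ : ℂ)⁻¹ • w (m + 1) := by
    rw [hLrec, smul_smul, inv_mul_cancel₀ hγ0, one_smul]
  -- case ℓ = 1
  have h1rec := hrec 1 le_rfl (Nat.le_add_left 1 m)
  have h10 : prodConjT w 1 0 = 1 := by simp [prodConjT]
  rw [Nat.sub_self, h10, mul_one] at h1rec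
  have hz2 : prodConjT w 2 (m + 1) * z = (γ : ℂ)⁻¹ • w 1 := by
    rw [h1rec, smul_smul, inv_mul_cancel₀ hγ0, one_smul]
  constructor
  · rw [conjT_prodRev, prodConjT_one_succ, ← mul_assoc, hz1]
    unfold Matrix.IsHermitian
    rw [smul_mul_assoc, conjTranspose_smul, conjTranspose_mul,
      conjTranspose_conjTranspose, Complex.star_def, hγconj]
  · rw [conjT_prodRev, prodConjT_one_front, mul_assoc, hz2]
    unfold Matrix.IsHermitian
    rw [mul_smul_comm, conjTranspose_smul, conjTranspose_mul,
      conjTranspose_conjTranspose, Complex.star_def, hγconj]
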